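/- Let A be a Dedekind domain and let f be a nonzero non-unit element of the polynomial ring A[x]. Let S be the multiplicative subset of A[x] generated by f together with all elements of the form 1 + f·g with g ∈ A[x]. Then the localization S⁻¹(A[x]) is a Dedekind domain. -/

import Mathlib

/-!
`A[X]` is a Noetherian integrally closed domain of Krull dimension `dim A + 1 ≤ 2`, and the
localization inherits the first three properties. The set `S` meets every maximal ideal `m`
of `A[X]`: either `f ∈ m`, or `f` is invertible modulo `m` and then `1 + f * g ∈ m` for some
`g`. So a prime of `S⁻¹ A[X]` pulls back to a prime lying strictly below a maximal ideal,
which cuts the dimension down to at most `1`.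
-/

open Polynomial

theorem IsLocalization.krullDimLE_of_not_disjoint_isMaximal {R : Type*} [CommRing R]
    (S : Submonoid R) (L : Type*) [CommRing L] [Algebra R L] [IsLocalization S L]
    (hS : ∀ m : Ideal R, m.IsMaximal → ¬ Disjoint (S : Set R) m) (n : ℕ)
    [Ring.KrullDimLE (n + 1) R] : Ring.KrullDimLE n L := by
  rw [Ring.krullDimLE_iff, ringKrullDim_le_iff_height_le]
  intro P hP
  have hq : (P.under R).IsPrime := Ideal.IsPrime.under R P
  obtain ⟨m, hm, hqm⟩ := (P.under R).exists_le_maximal hq.ne_top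
  have hlt : P.under R < m := lt_of_le_of_ne hqm fun h ↦
    hS m hm (h ▸ ((IsLocalization.isPrime_iff_isPrime_disjoint S L P).mp hP).2)
  have hm_le : (m.height : WithBot ℕ∞) ≤ (n + 1 : ℕ) :=
    (Ideal.height_le_ringKrullDim_of_ne_top hm.ne_top).trans (Ring.krullDimLE_iff.mp ‹_›)
  have hq_le : (P.under R).height + 1 ≤ n + 1 :=
    (Ideal.height_add_one_le_of_lt_of_isPrime hlt).trans (by exact_mod_cast hm_le)
  rw [← IsLocalization.height_under S P]
  exact_mod_cast (ENat.add_le_add_iff_right ENat.one_ne_top).mp hq_le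

theorem Ideal.IsMaximal.exists_one_add_mul_mem_of_notMem {R : Type*} [CommRing R]
    {m : Ideal R} (hm : m.IsMaximal) {f : R} (hf : f ∉ m) : ∃ g, 1 + f * g ∈ m := by
  obtain ⟨y, i, hi, hyi⟩ := hm.exists_inv hf
  exact ⟨-y, by rwa [show 1 + f * -y = i by rw [← hyi]; ring]⟩

theorem Submonoid.closure_one_add_mul_le_nonZeroDivisors {A : Type*} [CommRing A] [IsDomain A]
    {f : A} (hf0 : f ≠ 0) (hfu : ¬ IsUnit f) :
    closure ({f} ∪ Set.range (fun g : A => 1 + f * g)) ≤ nonZeroDivisors A := by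
  refine closure_le.mpr fun x hx ↦ mem_nonZeroDivisors_of_ne_zero ?_
  rcases hx with rfl | ⟨g, rfl⟩
  · exact hf0
  · exact fun h ↦ hfu (.of_mul_eq_one (-g) (by linear_combination -h))

theorem Submonoid.not_disjoint_closure_one_add_mul_of_isMaximal {R : Type*} [CommRing R]
    (f : R) {m : Ideal R} (hm : m.IsMaximal) :
    ¬ Disjoint (closure ({f} ∪ Set.range (fun g : R => 1 + f * g)) : Set R) m := by
  refine Set.not_disjoint_iff.mpr ?_
  by_cases hf : f ∈ m
  · exact ⟨f, subset_closure (.inl rfl), hf⟩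
  · obtain ⟨g, hg⟩ := hm.exists_one_add_mul_mem_of_notMem hf
    exact ⟨_, subset_closure (.inr ⟨g, rfl⟩), hg⟩

/-- Let `A` be a Dedekind domain and let `f` be a nonzero non-unit element of the
polynomial ring `A[x]`. Let `S` be the multiplicative subset of `A[x]` generated by `f`
together with all elements of the form `1 + f * g` with `g ∈ A[x]`. Then the
localization `S⁻¹(A[x])` is a Dedekind domain. -/
theorem stmt_1 (A : Type*) [CommRing A] [IsDedekindDomain A]
    (f : Polynomial A) (hf0 : f ≠ 0) (hfu : ¬ IsUnit f) :
    IsDedekindDomain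
      (Localization
        (Submonoid.closure ({f} ∪ Set.range (fun g : Polynomial A => 1 + f * g)))) := by
  set S := Submonoid.closure ({f} ∪ Set.range (fun g : Polynomial A => 1 + f * g))
  have hS := Submonoid.closure_one_add_mul_le_nonZeroDivisors hf0 hfu
  have : IsDomain (Localization S) := IsLocalization.isDomain_localization hS
  have : IsIntegrallyClosed (Localization S) := isIntegrallyClosed_of_isLocalization _ S hS
  have : Ring.KrullDimLE (1 + 1) A[X] := by
    rw [Ring.krullDimLE_iff, Polynomial.ringKrullDim_of_isNoetherianRing, Nat.cast_add]
    exact add_le_add_left (Ring.krullDimLE_iff.mp inferInstance) _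
  have : Ring.KrullDimLE 1 (Localization S) :=
    IsLocalization.krullDimLE_of_not_disjoint_isMaximal S _
      (fun _ hm ↦ Submonoid.not_disjoint_closure_one_add_mul_of_isMaximal f hm) 1
  have : Ring.DimensionLEOne (Localization S) :=
    ⟨Ring.krullDimLE_one_iff_of_noZeroDivisors.mp this _⟩
  exact {}
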